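/- arXiv:2410.08075 — 6 statements merged into one kernel-verified Lean document; each statement's English description precedes it below -/
import Mathlib

section
/- Let (λ, μ) ∈ Host_n with dual pair (λ̃, μ̃) as defined by the jigsaw operation, and let ν be the valuation partition defined by ν_i = Σ_{j>i} (λ_j − μ_j). Then gap(λ̃, μ̃) = n·|λ − μ| − |ν|, where gap(α, β) is the total number of cells of α lying in columns of α that contain no cell of the horizontal strip α − β and below no cell of α − β; equivalently gap(α, β) = Σ_i (β_i − Σ_{j>i}(α_j − β_j)). -/
/-- The `k`-th part of the conjugate of a partition given by parts `f 1, …, f n`. -/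
def conjPart (n : ℕ) (f : ℕ → ℕ) (k : ℕ) : ℕ :=
  ((Finset.Icc 1 n).filter (fun i => k ≤ f i)).card

/-- `λ − μ` is a horizontal strip (at most one cell in each column). -/
def IsHorizontalStrip (n : ℕ) (lam mu : ℕ → ℕ) : Prop :=
  ∀ k, 1 ≤ k → conjPart n lam k ≤ conjPart n mu k + 1

/-- The gap statistic `gap(α, β) = Σ_{i=1}^{n−1} (β_i − Σ_{j>i} (α_j − β_j))`:
the number of cells of `α` lying in columns containing no cell of the horizontal
strip `α − β` and below no cell of `α − β`. -/
def gapZ (n : ℕ) (alpha beta : ℕ → ℕ) : ℤ :=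
  ∑ i ∈ Finset.Icc 1 (n - 1),
    ((beta i : ℤ) - ∑ j ∈ Finset.Icc (i + 1) n, ((alpha j : ℤ) - (beta j : ℤ)))

open Finset

lemma anti_le {f : ℕ → ℕ} (h : ∀ i, 1 ≤ i → f (i+1) ≤ f i) :
    ∀ i j, 1 ≤ i → i ≤ j → f j ≤ f i := by
  intro i j hi hij
  induction j with
  | zero => omega
  | succ j ih =>
    rcases Nat.lt_or_ge i (j+1) with h1 | h2
    · exact le_trans (h j (by omega)) (ih (by omega))
    · have : i = j + 1 := by omega
      subst this; exact le_rfl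

lemma swap1 (M : ℕ) (D : ℕ → ℤ) :
    ∑ i ∈ Icc 1 M, ∑ j ∈ Icc (i+1) (M+1), D j
      = ∑ j ∈ Icc 2 (M+1), ((j:ℤ) - 1) * D j := by
  rw [Finset.sum_comm' (s' := fun j => Icc 1 (j-1)) (t' := Icc 2 (M+1))
    (by intro i j; simp only [mem_Icc]; omega)]
  refine Finset.sum_congr rfl fun j hj => ?_
  simp only [mem_Icc] at hj
  rw [Finset.sum_const, Nat.card_Icc, nsmul_eq_mul]
  have : ((j - 1 + 1 - 1 : ℕ) : ℤ) = (j:ℤ) - 1 := by push_cast; omega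
  rw [this]

lemma swap2 (N : ℕ) (C : ℕ → ℤ) :
    ∑ i ∈ range N, ∑ j ∈ Icc (i+1) N, C j
      = ∑ j ∈ Icc 1 N, (j:ℤ) * C j := by
  rw [Finset.sum_comm' (s' := fun j => range j) (t' := Icc 1 N)
    (by intro i j; simp only [mem_Icc, mem_range]; omega)]
  refine Finset.sum_congr rfl fun j hj => ?_
  rw [Finset.sum_const, card_range, nsmul_eq_mul]

lemma final_alg (m : ℕ) (A B : ℕ → ℤ) :
    (∑ t ∈ range (m+1), (A 1 - B (t+1)))
      - ∑ t ∈ range m, ((m:ℤ) - t) * (B (t+1) - A (t+2))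
    = ∑ k ∈ range (m+1), ((m:ℤ) + 1 - k) * (A (k+1) - B (k+1)) := by
  have hdA : ∑ k ∈ range (m+1), ((m:ℤ) + 1 - k) * A (k+1)
      = (∑ t ∈ range m, ((m:ℤ) - t) * A (t+2)) + ((m:ℤ) + 1) * A 1 := by
    rw [Finset.sum_range_succ' (fun k => ((m:ℤ) + 1 - k) * A (k+1)) m]
    push_cast
    congr 1
    refine Finset.sum_congr rfl fun t _ => ?_
    push_cast
    ring
  have hdB : ∑ k ∈ range (m+1), ((m:ℤ) + 1 - k) * B (k+1)
      = (∑ k ∈ range (m+1), B (k+1)) + ∑ t ∈ range m, ((m:ℤ) - t) * B (t+1) := by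
    have h1 : ∑ k ∈ range (m+1), ((m:ℤ) + 1 - k) * B (k+1)
        = ∑ k ∈ range (m+1), (B (k+1) + ((m:ℤ) - k) * B (k+1)) := by
      refine Finset.sum_congr rfl fun k _ => by ring
    rw [h1, Finset.sum_add_distrib]
    congr 1
    rw [Finset.sum_range_succ]
    simp
  have hsplit : ∑ k ∈ range (m+1), ((m:ℤ) + 1 - k) * (A (k+1) - B (k+1))
      = (∑ k ∈ range (m+1), ((m:ℤ) + 1 - k) * A (k+1))
        - ∑ k ∈ range (m+1), ((m:ℤ) + 1 - k) * B (k+1) := by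
    rw [← Finset.sum_sub_distrib]
    exact Finset.sum_congr rfl fun k _ => by ring
  have hS1 : (∑ t ∈ range (m+1), (A 1 - B (t+1)))
      = ((m:ℤ) + 1) * A 1 - ∑ t ∈ range (m+1), B (t+1) := by
    rw [Finset.sum_sub_distrib, Finset.sum_const, card_range, nsmul_eq_mul]
    push_cast; ring
  have hS2 : ∑ t ∈ range m, ((m:ℤ) - t) * (B (t+1) - A (t+2))
      = (∑ t ∈ range m, ((m:ℤ) - t) * B (t+1)) - ∑ t ∈ range m, ((m:ℤ) - t) * A (t+2) := by
    rw [← Finset.sum_sub_distrib]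
    exact Finset.sum_congr rfl fun t _ => by ring
  rw [hsplit, hdA, hdB, hS1, hS2]
  ring

/-- For `(λ, μ) ∈ Host_n` with jigsaw dual `(λ̃, μ̃)` and the
valuation entries `ν_i = Σ_{j>i} (λ_j − μ_j)` (here `i` runs over `0, 1, …, n−1`,
so that `|ν| = Σ_{i=0}^{n−1} ν_i = Σ_j j·(λ_j − μ_j)`), one has
`gap(λ̃, μ̃) = n·|λ − μ| − |ν|`. -/
theorem stmt_2 (n : ℕ) (hn : 1 ≤ n) (lam mu : ℕ → ℕ)
    (hlam_anti : ∀ i, 1 ≤ i → lam (i + 1) ≤ lam i)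
    (hlam_fin : ∀ i, n < i → lam i = 0)
    (hmu_anti : ∀ i, 1 ≤ i → mu (i + 1) ≤ mu i)
    (hmu_fin : ∀ i, n - 1 < i → mu i = 0)
    (hsub : ∀ i, 1 ≤ i → mu i ≤ lam i)
    (hhs : IsHorizontalStrip n lam mu)
    (tlam tmu nu : ℕ → ℕ)
    (htlam : tlam = fun i => if 1 ≤ i ∧ i ≤ n then lam 1 - lam (n + 1 - i) else 0)
    (htmu : tmu = fun i => if 1 ≤ i ∧ i ≤ n - 1 then lam 1 - mu (n - i) else 0)
    (hnu : nu = fun i => ∑ j ∈ Finset.Icc (i + 1) n, (lam j - mu j)) :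
    gapZ n tlam tmu =
      (n : ℤ) * (∑ j ∈ Finset.Icc 1 n, ((lam j : ℤ) - (mu j : ℤ)))
        - ∑ i ∈ Finset.range n, (nu i : ℤ) := by
  have hlam_le : ∀ i j, 1 ≤ i → i ≤ j → lam j ≤ lam i := anti_le hlam_anti
  have hmu_le : ∀ k, 1 ≤ k → mu k ≤ lam 1 := fun k hk =>
    le_trans (hsub k hk) (hlam_le 1 k le_rfl hk)
  -- rewrite the nu-sum
  have hnucast : ∑ i ∈ Finset.range n, (nu i : ℤ)
      = ∑ j ∈ Finset.Icc 1 n, (j:ℤ) * ((lam j : ℤ) - (mu j : ℤ)) := by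
    rw [← swap2]
    refine Finset.sum_congr rfl fun i _ => ?_
    rw [hnu]
    push_cast [Nat.cast_sum]
    refine Finset.sum_congr rfl fun j hj => ?_
    simp only [mem_Icc] at hj
    rw [Nat.cast_sub (hsub j (by omega))]
  rw [hnucast]
  have hRHS : (n : ℤ) * (∑ j ∈ Finset.Icc 1 n, ((lam j : ℤ) - (mu j : ℤ)))
      - ∑ j ∈ Finset.Icc 1 n, (j:ℤ) * ((lam j : ℤ) - (mu j : ℤ))
      = ∑ j ∈ Finset.Icc 1 n, ((n:ℤ) - j) * ((lam j : ℤ) - (mu j : ℤ)) := by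
    rw [Finset.mul_sum, ← Finset.sum_sub_distrib]
    exact Finset.sum_congr rfl fun j _ => by ring
  rw [hRHS]
  rcases Nat.lt_or_ge n 2 with hsmall | h2
  · have hn1 : n = 1 := by omega
    subst hn1
    have hmu1 : mu 1 = 0 := hmu_fin 1 (by norm_num)
    simp [gapZ, htmu, hmu1]
  · obtain ⟨m, rfl⟩ : ∃ m, n = m + 2 := ⟨n - 2, by omega⟩
    -- the D-function
    set D : ℕ → ℤ := fun j =>
      if j ≤ m + 1 then (mu (m + 2 - j) : ℤ) - (lam (m + 2 + 1 - j) : ℤ) else 0 with hD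
    have e1 : gapZ (m+2) tlam tmu
        = ∑ i ∈ Icc 1 (m+1), (((lam 1 : ℤ) - (mu (m + 2 - i) : ℤ))
            - ∑ j ∈ Icc (i+1) (m+2), D j) := by
      show (∑ i ∈ Finset.Icc 1 (m + 2 - 1),
          ((tmu i : ℤ) - ∑ j ∈ Finset.Icc (i + 1) (m+2), ((tlam j : ℤ) - (tmu j : ℤ)))) = _
      have : m + 2 - 1 = m + 1 := by omega
      rw [this]
      refine Finset.sum_congr rfl fun i hi => ?_
      simp only [mem_Icc] at hi
      congr 1
      · rw [htmu]
        simp only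
        rw [if_pos ⟨hi.1, by omega⟩, Nat.cast_sub (hmu_le _ (by omega))]
      · refine Finset.sum_congr rfl fun j hj => ?_
        simp only [mem_Icc] at hj
        rw [htlam, htmu, hD]
        simp only
        by_cases hcase : j ≤ m + 1
        · rw [if_pos ⟨by omega, by omega⟩, if_pos ⟨by omega, by omega⟩, if_pos hcase,
            Nat.cast_sub (hlam_le 1 _ le_rfl (by omega)), Nat.cast_sub (hmu_le _ (by omega))]
          ring
        · have hj2 : j = m + 2 := by omega
          subst hj2
          rw [if_pos ⟨by omega, by omega⟩, if_neg (by omega), if_neg (by omega)]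
          have : m + 2 + 1 - (m + 2) = 1 := by omega
          rw [this]
          simp
    rw [e1, Finset.sum_sub_distrib, swap1 (m+1) D]
    -- drop the top term of the D-sum
    have e2 : ∑ j ∈ Icc 2 (m+1+1), ((j:ℤ) - 1) * D j
        = ∑ j ∈ Icc 2 (m+1), ((j:ℤ) - 1) * D j := by
      symm
      apply Finset.sum_subset (Finset.Icc_subset_Icc_right (by omega))
      intro x hx hnx
      simp only [mem_Icc] at hx hnx
      have hx2 : x = m + 2 := by omega
      subst hx2
      rw [hD]
      simp only
      rw [if_neg (by omega), mul_zero]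
    rw [e2]
    -- reindex the D-sum
    have e3 : ∑ j ∈ Icc 2 (m+1), ((j:ℤ) - 1) * D j
        = ∑ t ∈ range m, ((m:ℤ) - t) * ((mu (t+1) : ℤ) - (lam (t+2) : ℤ)) := by
      refine Finset.sum_nbij' (fun j => m + 1 - j) (fun t => m + 1 - t) ?_ ?_ ?_ ?_ ?_
      · intro a ha; simp only [mem_Icc] at ha; simp only [mem_range]; omega
      · intro a ha; simp only [mem_range] at ha; simp only [mem_Icc]; omega
      · intro a ha; simp only [mem_Icc] at ha; omega
      · intro a ha; simp only [mem_range] at ha; omega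
      · intro a ha
        simp only [mem_Icc] at ha
        rw [hD]
        simp only
        rw [if_pos (by omega)]
        have h1 : m + 2 - a = m + 1 - a + 1 := by omega
        have h2 : m + 2 + 1 - a = m + 1 - a + 2 := by omega
        have h3 : ((m + 1 - a : ℕ) : ℤ) = (m:ℤ) + 1 - a := by push_cast; omega
        rw [h1, h2, h3]
        ring
    rw [e3]
    -- reindex the first sum
    have e4 : ∑ i ∈ Icc 1 (m+1), ((lam 1 : ℤ) - (mu (m + 2 - i) : ℤ))
        = ∑ t ∈ range (m+1), ((lam 1 : ℤ) - (mu (t+1) : ℤ)) := by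
      refine Finset.sum_nbij' (fun i => m + 1 - i) (fun t => m + 1 - t) ?_ ?_ ?_ ?_ ?_
      · intro a ha; simp only [mem_Icc] at ha; simp only [mem_range]; omega
      · intro a ha; simp only [mem_range] at ha; simp only [mem_Icc]; omega
      · intro a ha; simp only [mem_Icc] at ha; omega
      · intro a ha; simp only [mem_range] at ha; omega
      · intro a ha
        simp only [mem_Icc] at ha
        have : m + 1 - a + 1 = m + 2 - a := by omega
        rw [this]
    rw [e4]
    -- reindex RHS
    have e5 : ∑ j ∈ Finset.Icc 1 (m+2), (((m+2:ℕ):ℤ) - j) * ((lam j : ℤ) - (mu j : ℤ))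
        = ∑ k ∈ range (m+1), ((m:ℤ) + 1 - k) * ((lam (k+1) : ℤ) - (mu (k+1) : ℤ)) := by
      rw [← Finset.Ico_add_one_right_eq_Icc, Finset.sum_Ico_eq_sum_range]
      have hc : m + 2 + 1 - 1 = m + 2 := by omega
      rw [hc, Finset.sum_range_succ]
      have htop : (((m+2:ℕ):ℤ) - ((1 + (m+1) : ℕ):ℤ)) = 0 := by push_cast; ring
      rw [htop, zero_mul, add_zero]
      refine Finset.sum_congr rfl fun k hk => ?_
      have h1 : 1 + k = k + 1 := by omega
      rw [h1]
      push_cast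
      ring
    rw [e5]
    exact final_alg m (fun k => (lam k : ℤ)) (fun k => (mu k : ℤ))
end

section
/- Let (λ, μ) ∈ Host_n. Let C_{λ,μ} be the set of corners (μ'_a, a) of μ such that μ'_a = λ'_a and μ'_{a+1} < λ'_{a+1}, and let J_{λ,μ} be the set of second coordinates of elements of C_{λ,μ}. Then the map a ↦ λ_1 − a is a bijection from J_{λ,μ} to J_{λ̃,μ̃} (where (λ̃, μ̃) is the jigsaw dual pair), and for each a ∈ J_{λ,μ} one has μ'_a − μ'_{a+1} = μ̃'_{λ_1−a} − μ̃'_{λ_1−a+1}. -/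
/-- `J_{λ,μ}`: the set of column indices `a ≥ 1` such that `(μ'_a, a)` is a corner
of `μ` with `μ'_a = λ'_a` and `μ'_{a+1} < λ'_{a+1}`. -/
def Jset (n : ℕ) (lam mu : ℕ → ℕ) : Set ℕ :=
  {a | 1 ≤ a ∧ conjPart n mu a = conjPart n lam a ∧
    conjPart n mu (a + 1) < conjPart n lam (a + 1)}

/-!
Complementing inside the `n × λ₁` box and rotating by `180°` turns column `i` of `λ` into column
`λ₁ + 1 - i` of `λ̃` with the complementary number of cells, so `λ'_i + λ̃'_{λ₁+1-i} = n`; likewise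
`μ'_i + μ̃'_{λ₁+1-i} = n - 1` in the `(n - 1) × λ₁` box. Writing `b = λ₁ - a`, the condition
`μ̃'_b = λ̃'_b` becomes `λ'_{a+1} = μ'_{a+1} + 1`, and `μ̃'_{b+1} < λ̃'_{b+1}` becomes
`λ'_a ≤ μ'_a`; since `μ ⊆ λ` and `λ - μ` is a horizontal strip, `μ' ≤ λ' ≤ μ' + 1`, so these are
exactly the conditions `μ'_{a+1} < λ'_{a+1}` and `μ'_a = λ'_a` defining `a ∈ J_{λ,μ}`.
-/

open Finset

/-- The complement of `f` in the `m × L` box, rotated by `180°`; `boxComplement n λ₁ λ` is `λ̃`. -/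
def boxComplement (m L : ℕ) (f : ℕ → ℕ) : ℕ → ℕ :=
  fun i => if 1 ≤ i ∧ i ≤ m then L - f (m + 1 - i) else 0

lemma card_filter_Icc_reflect (m : ℕ) (p : ℕ → Prop) [DecidablePred p] :
    #{i ∈ Icc 1 m | p (m + 1 - i)} = #{i ∈ Icc 1 m | p i} := by
  apply card_nbij' (m + 1 - ·) (m + 1 - ·) <;> intro i hi <;>
    simp only [coe_filter, mem_Icc, Set.mem_ofPred_eq] at hi ⊢
  · exact ⟨by omega, hi.2⟩
  · exact ⟨by omega, by rw [show m + 1 - (m + 1 - i) = i by omega]; exact hi.2⟩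
  all_goals omega

lemma conjPart_mono {n : ℕ} {f g : ℕ → ℕ} (h : ∀ i, 1 ≤ i → f i ≤ g i) (k : ℕ) :
    conjPart n f k ≤ conjPart n g k :=
  card_le_card fun i hi => by
    simp only [mem_filter, mem_Icc] at hi ⊢
    exact ⟨hi.1, hi.2.trans (h i hi.1.1)⟩

lemma conjPart_eq_zero_of_lt {n L k : ℕ} {f : ℕ → ℕ} (hf : ∀ i, 1 ≤ i → f i ≤ L)
    (hk : L < k) : conjPart n f k = 0 := by
  refine card_eq_zero.mpr (filter_eq_empty_iff.mpr fun i hi => ?_)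
  have := hf i (mem_Icc.mp hi).1
  omega

lemma conjPart_eq_of_forall_gt_eq_zero {m N k : ℕ} {f : ℕ → ℕ} (hmN : m ≤ N)
    (hf : ∀ i, m < i → f i = 0) (hk : 1 ≤ k) : conjPart N f k = conjPart m f k := by
  unfold conjPart
  congr 1
  ext i
  simp only [mem_filter, mem_Icc]
  refine ⟨fun ⟨⟨h1, _⟩, hi⟩ => ⟨⟨h1, ?_⟩, hi⟩, fun ⟨⟨h1, h2⟩, hi⟩ => ⟨⟨h1, by omega⟩, hi⟩⟩
  by_contra h
  rw [hf i (by omega)] at hi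
  omega

lemma conjPart_add_conjPart_boxComplement (m L : ℕ) (f : ℕ → ℕ) {i : ℕ} (hiL : i ≤ L) :
    conjPart m f i + conjPart m (boxComplement m L f) (L + 1 - i) = m := by
  have hcompl : conjPart m (boxComplement m L f) (L + 1 - i) = #{j ∈ Icc 1 m | ¬ i ≤ f j} := by
    rw [← card_filter_Icc_reflect]
    unfold conjPart
    congr 1
    refine filter_congr fun j hj => ?_
    rw [mem_Icc] at hj
    simp only [boxComplement, if_pos hj]
    omega
  rw [hcompl, conjPart, card_filter_add_card_filter_not, Nat.card_Icc, Nat.add_sub_cancel]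

lemma boxComplement_le (m L : ℕ) (f : ℕ → ℕ) (i : ℕ) : boxComplement m L f i ≤ L := by
  unfold boxComplement
  split_ifs <;> omega

lemma boxComplement_of_lt {m L i : ℕ} (f : ℕ → ℕ) (hi : m < i) : boxComplement m L f i = 0 :=
  if_neg (by omega)

lemma Set.bijOn_tsub_of_mem_iff {L : ℕ} {S T : Set ℕ} (hS : S ⊆ Set.Ioo 0 L)
    (hT : T ⊆ Set.Ioo 0 L) (h : ∀ a ∈ Set.Ioo 0 L, a ∈ S ↔ L - a ∈ T) :
    Set.BijOn (fun a => L - a) S T := by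
  refine ⟨fun a ha => (h a (hS ha)).mp ha, fun a ha a' ha' (e : L - a = L - a') => ?_,
    fun b hb => ?_⟩
  · have := hS ha
    have := hS ha'
    simp only [Set.mem_Ioo] at *
    omega
  · obtain ⟨hb0, hbL⟩ := hT hb
    have hb' : L - (L - b) = b := Nat.sub_sub_self hbL.le
    exact ⟨L - b, (h _ ⟨by omega, by omega⟩).mpr (hb'.symm ▸ hb), hb'⟩

lemma Jset_subset_Ioo {n L : ℕ} {lam : ℕ → ℕ} (hlam : ∀ i, 1 ≤ i → lam i ≤ L) (mu : ℕ → ℕ) :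
    Jset n lam mu ⊆ Set.Ioo 0 L := by
  rintro a ⟨ha, -, hlt⟩
  refine ⟨ha, Nat.lt_of_not_le fun haL => ?_⟩
  rw [conjPart_eq_zero_of_lt hlam (by omega)] at hlt
  omega

lemma mem_Jset_iff_tsub_mem_Jset {n L : ℕ} {lam mu tlam tmu : ℕ → ℕ}
    (hsub : ∀ k, conjPart n mu k ≤ conjPart n lam k)
    (hhs : IsHorizontalStrip n lam mu)
    (hdual_lam : ∀ i, 1 ≤ i → i ≤ L → conjPart n lam i + conjPart n tlam (L + 1 - i) = n)
    (hdual_mu : ∀ i, 1 ≤ i → i ≤ L → conjPart n mu i + conjPart n tmu (L + 1 - i) = n - 1)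
    {a : ℕ} (ha : a ∈ Set.Ioo 0 L) : a ∈ Jset n lam mu ↔ L - a ∈ Jset n tlam tmu := by
  obtain ⟨ha0, haL⟩ := ha
  have hlam_a := hdual_lam a ha0 haL.le
  have hlam_succ := hdual_lam (a + 1) (by omega) haL
  have hmu_a := hdual_mu a ha0 haL.le
  have hmu_succ := hdual_mu (a + 1) (by omega) haL
  rw [show L + 1 - a = L - a + 1 by omega] at hlam_a hmu_a
  rw [show L + 1 - (a + 1) = L - a by omega] at hlam_succ hmu_succ
  have := hsub a
  have := hsub (a + 1)
  have := hhs a ha0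
  have := hhs (a + 1) (by omega)
  simp only [Jset, Set.mem_ofPred_eq]
  omega

lemma conjPart_sub_conjPart_eq_tsub {n L : ℕ} {mu tmu : ℕ → ℕ}
    (hdual_mu : ∀ i, 1 ≤ i → i ≤ L → conjPart n mu i + conjPart n tmu (L + 1 - i) = n - 1)
    {a : ℕ} (ha : a ∈ Set.Ioo 0 L) :
    conjPart n mu a - conjPart n mu (a + 1) =
      conjPart n tmu (L - a) - conjPart n tmu (L - a + 1) := by
  obtain ⟨ha0, haL⟩ := ha
  have hmu_a := hdual_mu a ha0 haL.le
  have hmu_succ := hdual_mu (a + 1) (by omega) haL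
  rw [show L + 1 - a = L - a + 1 by omega] at hmu_a
  rw [show L + 1 - (a + 1) = L - a by omega] at hmu_succ
  omega

theorem stmt_3_general (n : ℕ) (lam mu : ℕ → ℕ)
    (hlam_anti : ∀ i, 1 ≤ i → lam (i + 1) ≤ lam i)
    (hmu_fin : ∀ i, n - 1 < i → mu i = 0)
    (hsub : ∀ i, 1 ≤ i → mu i ≤ lam i)
    (hhs : IsHorizontalStrip n lam mu)
    (tlam tmu : ℕ → ℕ)
    (htlam : tlam = fun i => if 1 ≤ i ∧ i ≤ n then lam 1 - lam (n + 1 - i) else 0)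
    (htmu : tmu = fun i => if 1 ≤ i ∧ i ≤ n - 1 then lam 1 - mu (n - i) else 0) :
    Set.BijOn (fun a => lam 1 - a) (Jset n lam mu) (Jset n tlam tmu) ∧
    ∀ a ∈ Jset n lam mu,
      conjPart n mu a - conjPart n mu (a + 1) =
        conjPart n tmu (lam 1 - a) - conjPart n tmu (lam 1 - a + 1) := by
  set L := lam 1
  have hlam_le : ∀ i, 1 ≤ i → lam i ≤ L := fun i hi =>
    antitoneOn_nat_Ici_of_succ_le hlam_anti (Nat.le_refl 1) hi hi
  replace htlam : tlam = boxComplement n L lam := htlam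
  replace htmu : tmu = boxComplement (n - 1) L mu := by
    rw [htmu]
    funext i
    by_cases hi : 1 ≤ i ∧ i ≤ n - 1
    · simp only [boxComplement, if_pos hi, show n - 1 + 1 - i = n - i by omega]
    · simp only [boxComplement, if_neg hi]
  subst htlam htmu
  have hdual_lam : ∀ i, 1 ≤ i → i ≤ L →
      conjPart n lam i + conjPart n (boxComplement n L lam) (L + 1 - i) = n :=
    fun i _ hiL => conjPart_add_conjPart_boxComplement n L lam hiL
  have hdual_mu : ∀ i, 1 ≤ i → i ≤ L →
      conjPart n mu i + conjPart n (boxComplement (n - 1) L mu) (L + 1 - i) = n - 1 := by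
    intro i hi hiL
    rw [conjPart_eq_of_forall_gt_eq_zero (n.sub_le 1) hmu_fin hi,
      conjPart_eq_of_forall_gt_eq_zero (n.sub_le 1) (fun j => boxComplement_of_lt mu) (by omega)]
    exact conjPart_add_conjPart_boxComplement (n - 1) L mu hiL
  refine ⟨Set.bijOn_tsub_of_mem_iff (Jset_subset_Ioo hlam_le mu)
      (Jset_subset_Ioo (fun i _ => boxComplement_le n L lam i) _)
      fun a ha => mem_Jset_iff_tsub_mem_Jset (conjPart_mono hsub) hhs hdual_lam hdual_mu ha,
    fun a ha => conjPart_sub_conjPart_eq_tsub hdual_mu (Jset_subset_Ioo hlam_le mu ha)⟩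

/-- For `(λ, μ) ∈ Host_n` with jigsaw dual `(λ̃, μ̃)`, the map
`a ↦ λ₁ − a` is a bijection `J_{λ,μ} → J_{λ̃,μ̃}`, and for each `a ∈ J_{λ,μ}` one has
`μ'_a − μ'_{a+1} = μ̃'_{λ₁−a} − μ̃'_{λ₁−a+1}`. -/
theorem stmt_3 (n : ℕ) (hn : 1 ≤ n) (lam mu : ℕ → ℕ)
    (hlam_anti : ∀ i, 1 ≤ i → lam (i + 1) ≤ lam i)
    (hlam_fin : ∀ i, n < i → lam i = 0)
    (hmu_anti : ∀ i, 1 ≤ i → mu (i + 1) ≤ mu i)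
    (hmu_fin : ∀ i, n - 1 < i → mu i = 0)
    (hsub : ∀ i, 1 ≤ i → mu i ≤ lam i)
    (hhs : IsHorizontalStrip n lam mu)
    (tlam tmu : ℕ → ℕ)
    (htlam : tlam = fun i => if 1 ≤ i ∧ i ≤ n then lam 1 - lam (n + 1 - i) else 0)
    (htmu : tmu = fun i => if 1 ≤ i ∧ i ≤ n - 1 then lam 1 - mu (n - i) else 0) :
    Set.BijOn (fun a => lam 1 - a) (Jset n lam mu) (Jset n tlam tmu) ∧
    ∀ a ∈ Jset n lam mu,
      conjPart n mu a - conjPart n mu (a + 1) =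
        conjPart n tmu (lam 1 - a) - conjPart n tmu (lam 1 - a + 1) :=
  stmt_3_general n lam mu hlam_anti hmu_fin hsub hhs tlam tmu htlam htmu
end

section
/- For subsets A, B ⊆ [n] = {1,…,n}, write A ⊑ B if there exists a semistandard Young tableau with two columns whose first column has entry set A and second column has entry set B; equivalently, A ⊑ B iff #A ≥ #B and A(k) ≤ B(k) for all k ∈ [#B], where A(k) denotes the k-th smallest element of A. Then for nonempty C, D ⊆ [n], C ⊑ D if and only if [n]∖D ⊑ [n]∖C. -/
/-- The `k`-th smallest element of a finite set of naturals (0-indexed), with junk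
value `0` when `k ≥ #A`. -/
def nthSmall (A : Finset ℕ) (k : ℕ) : ℕ := (A.sort (· ≤ ·)).getD k 0

/-- The tableau (Gale) order: `A ⊑ B` iff `#A ≥ #B` and the `k`-th smallest element
of `A` is at most the `k`-th smallest element of `B` for all `k < #B`; equivalently,
there is a two-column semistandard tableau with column entry sets `A` and `B`. -/
def galeLe (A B : Finset ℕ) : Prop :=
  B.card ≤ A.card ∧ ∀ k < B.card, nthSmall A k ≤ nthSmall B k

/-!
The Gale order is a comparison of counting functions: the `k`-th smallest element of `A` lies
below `x` iff `A` has more than `k` elements below `x`, so `A ⊑ B` iff for every `x` the set `B`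
has at most as many elements below `x` as `A`. Inside a finite `S ⊇ C, D` the number of elements
of `S \ D` below `x` is that of `S` minus that of `D`, so passing to complements reverses these
inequalities.
-/

open Finset Nat

lemma nthSmall_eq_nth (A : Finset ℕ) (k : ℕ) : nthSmall A k = nth (· ∈ A) k := by
  rw [nth_eq_getD_sort (p := (· ∈ A)) A.finite_toSet, finite_toSet_toFinset, nthSmall]

lemma count_mem_le_card (A : Finset ℕ) (x : ℕ) : count (· ∈ A) x ≤ #A := by
  simpa using count_le_card A.finite_toSet x

lemma lt_count_mem_iff {A : Finset ℕ} {k x : ℕ} :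
    k < count (· ∈ A) x ↔ k < #A ∧ nthSmall A k < x := by
  rw [nthSmall_eq_nth]
  constructor
  · intro h
    exact ⟨h.trans_le (count_mem_le_card A x), nth_lt_of_lt_count h⟩
  · rintro ⟨hk, hx⟩
    have hk' : ∀ hf : (Set.ofPred (· ∈ A)).Finite, k < #hf.toFinset := fun hf => by
      simpa using hk
    calc k < count (· ∈ A) (nth (· ∈ A) k + 1) := by rw [count_nth_succ hk']; omega
      _ ≤ count (· ∈ A) x := count_monotone _ hx

lemma count_mem_sdiff {S D : Finset ℕ} (h : D ⊆ S) (x : ℕ) :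
    count (· ∈ S \ D) x = count (· ∈ S) x - count (· ∈ D) x := by
  simp only [count_eq_card_filter_range, filter_mem_eq_inter]
  rw [← card_sdiff_of_subset (inter_subset_inter_left h)]
  congr 1
  grind

lemma galeLe_iff_count_le {A B : Finset ℕ} :
    galeLe A B ↔ ∀ x, count (· ∈ B) x ≤ count (· ∈ A) x := by
  constructor
  · rintro ⟨hcard, hle⟩ x
    by_contra! hlt
    obtain ⟨hkB, hkx⟩ := lt_count_mem_iff.mp hlt
    have := lt_count_mem_iff.mpr ⟨hkB.trans_le hcard, (hle _ hkB).trans_lt hkx⟩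
    omega
  · intro h
    have hB : ∀ k < #B, k < #A ∧ nthSmall A k < nthSmall B k + 1 := fun k hk =>
      lt_count_mem_iff.mp ((lt_count_mem_iff.mpr ⟨hk, lt_add_one _⟩).trans_le (h _))
    refine ⟨?_, fun k hk => Nat.lt_add_one_iff.mp (hB k hk).2⟩
    by_contra! hlt
    exact lt_irrefl _ (hB _ hlt).1

theorem galeLe_iff_sdiff_galeLe_sdiff {S C D : Finset ℕ} (hC : C ⊆ S) (hD : D ⊆ S) :
    galeLe C D ↔ galeLe (S \ D) (S \ C) := by
  simp only [galeLe_iff_count_le, count_mem_sdiff hC, count_mem_sdiff hD]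
  refine forall_congr' fun x => ?_
  have := count_mono_left (p := (· ∈ C)) (q := (· ∈ S)) (n := x) fun _ _ hk => hC hk
  have := count_mono_left (p := (· ∈ D)) (q := (· ∈ S)) (n := x) fun _ _ hk => hD hk
  omega

theorem stmt_5_general (n : ℕ) (C D : Finset ℕ)
    (hCs : C ⊆ Finset.Icc 1 n) (hDs : D ⊆ Finset.Icc 1 n) :
    galeLe C D ↔ galeLe (Finset.Icc 1 n \ D) (Finset.Icc 1 n \ C) :=
  galeLe_iff_sdiff_galeLe_sdiff hCs hDs

/-- For nonempty `C, D ⊆ [n]`: `C ⊑ D` iff `[n]∖D ⊑ [n]∖C`. -/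
theorem stmt_5 (n : ℕ) (C D : Finset ℕ) (hC : C.Nonempty) (hD : D.Nonempty)
    (hCs : C ⊆ Finset.Icc 1 n) (hDs : D ⊆ Finset.Icc 1 n) :
    galeLe C D ↔ galeLe (Finset.Icc 1 n \ D) (Finset.Icc 1 n \ C) :=
  stmt_5_general n C D hCs hDs
end

section
/- Equip T_n = 2^{[n]} ∖ {∅} with the tableau (Gale) order ⊑, where A ⊑ B iff #A ≥ #B and the k-th smallest element of A is ≤ the k-th smallest element of B for all k ≤ #B. Let C = [a,b] ⊆ [n] be an interval with C ≠ {n}. Then the unique element covering C in T_n is Ĉ = ((C ∖ {b}) ∪ {b+1}) ∩ [n]. -/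
/-- Strict tableau order. -/
def galeLt (A B : Finset ℕ) : Prop := galeLe A B ∧ A ≠ B

/-- `B` covers `A` in the poset `T_n` of nonempty subsets of `[n]` with the tableau
order: `A ⊏ B` and there is no element of `T_n` strictly between them. -/
def galeCovers (n : ℕ) (A B : Finset ℕ) : Prop :=
  galeLt A B ∧ ∀ E : Finset ℕ, E.Nonempty → E ⊆ Finset.Icc 1 n →
    galeLt A E → galeLt E B → False

/-!
Write `C = [a, b]` as `[a, b + 1)`. If `C ⊏ D` then `#D ≤ #C` and `d_k ≥ a + k` for all
`k < #D`; when moreover `#D = #C`, the set `D` must contain an element `> b`, for otherwise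
`D ⊆ [a, b]` and the cardinalities force `D = C`. Hence every `D ∈ T_n` strictly above `C`
satisfies `Ĉ ⊑ D`: if `b < n` then `Ĉ = [a, b) ∪ {b + 1}` agrees with `C` except in its last
entry `b + 1`, which is at most the last entry of any `D` of full size; if `b = n` then
`Ĉ = [a, b)`, and no `D ⊆ [n]` of full size lies strictly above `C`. A least strict upper bound
in a partial order is its unique cover.
-/

open Finset

lemma nthSmall_eq_orderEmbOfFin (A : Finset ℕ) {m k : ℕ} (h : A.card = m) (hk : k < m) :
    nthSmall A k = A.orderEmbOfFin h ⟨k, hk⟩ := by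
  rw [nthSmall, orderEmbOfFin_apply, List.getD_eq_getElem _ _ (by rwa [length_sort, h])]
  rfl

lemma nthSmall_eq_of_strictMonoOn (A : Finset ℕ) {f : ℕ → ℕ} (hmem : ∀ k < A.card, f k ∈ A)
    (hf : StrictMonoOn f (Set.Iio A.card)) {k : ℕ} (hk : k < A.card) : nthSmall A k = f k := by
  rw [nthSmall_eq_orderEmbOfFin A rfl hk,
    ← orderEmbOfFin_unique rfl (f := fun i => f i) (fun i => hmem i i.2)
      (fun i j hij => hf i.2 j.2 hij)]

lemma nthSmall_zero_le {A : Finset ℕ} {x : ℕ} (hx : x ∈ A) : nthSmall A 0 ≤ x := by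
  rw [nthSmall_eq_orderEmbOfFin A rfl (card_pos.2 ⟨x, hx⟩), orderEmbOfFin_zero rfl]
  exact min'_le _ _ hx

lemma le_nthSmall_card_sub_one {A : Finset ℕ} {x : ℕ} (hx : x ∈ A) :
    x ≤ nthSmall A (A.card - 1) := by
  rw [nthSmall_eq_orderEmbOfFin A rfl (Nat.sub_lt (card_pos.2 ⟨x, hx⟩) one_pos),
    orderEmbOfFin_last rfl (card_pos.2 ⟨x, hx⟩)]
  exact le_max' _ _ hx

lemma nthSmall_Ico {a b k : ℕ} (hk : k < b - a) : nthSmall (Ico a b) k = a + k :=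
  nthSmall_eq_of_strictMonoOn _ (fun k hk => by simp only [Nat.card_Ico, mem_Ico] at hk ⊢; omega)
    (fun _ _ _ _ h => Nat.add_lt_add_left h a) (by rwa [Nat.card_Ico])

lemma card_insert_Ico {a b c : ℕ} (hbc : b ≤ c) : (insert c (Ico a b)).card = b - a + 1 := by
  rw [card_insert_of_notMem (by simp [hbc]), Nat.card_Ico]

lemma nthSmall_insert_Ico {a b c k : ℕ} (hbc : b ≤ c) (hk : k ≤ b - a) :
    nthSmall (insert c (Ico a b)) k = if k < b - a then a + k else c := by
  refine nthSmall_eq_of_strictMonoOn _ (f := fun k => if k < b - a then a + k else c)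
    (fun k hk => ?_) (fun i hi j hj hij => ?_) ?_
  · rw [card_insert_Ico hbc] at hk
    split_ifs
    · exact mem_insert_of_mem (mem_Ico.2 ⟨by omega, by omega⟩)
    · exact mem_insert_self _ _
  · simp only [card_insert_Ico hbc, Set.mem_Iio] at hi hj
    dsimp only
    split_ifs <;> omega
  · rw [card_insert_Ico hbc]; omega

lemma galeLe_Ico_iff {a b : ℕ} {D : Finset ℕ} :
    galeLe (Ico a b) D ↔ D.card ≤ b - a ∧ ∀ k < D.card, a + k ≤ nthSmall D k := by
  rw [galeLe, Nat.card_Ico]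
  refine and_congr_right fun hD => forall₂_congr fun k hk => ?_
  rw [nthSmall_Ico (by omega)]

lemma galeLe_antisymm {A B : Finset ℕ} (hAB : galeLe A B) (hBA : galeLe B A) : A = B := by
  have hcard : A.card = B.card := le_antisymm hBA.1 hAB.1
  have hemb : A.orderEmbOfFin hcard = B.orderEmbOfFin rfl := by
    ext i
    rw [← nthSmall_eq_orderEmbOfFin, ← nthSmall_eq_orderEmbOfFin]
    exact le_antisymm (hAB.2 i i.2) (hBA.2 i (by omega))
  rw [← coe_inj, ← range_orderEmbOfFin A hcard, hemb, range_orderEmbOfFin]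

lemma exists_le_of_galeLt_Ico {a b : ℕ} {D : Finset ℕ} (h : galeLt (Ico a b) D)
    (hcard : D.card = b - a) : ∃ x ∈ D, b ≤ x := by
  by_contra! hlt
  obtain ⟨-, hle⟩ := galeLe_Ico_iff.1 h.1
  refine h.2 (eq_of_subset_of_card_le (fun x hx => ?_) (by rw [hcard, Nat.card_Ico])).symm
  have ha0 : a ≤ nthSmall D 0 := hle 0 (card_pos.2 ⟨x, hx⟩)
  have h0x : nthSmall D 0 ≤ x := nthSmall_zero_le hx
  exact mem_Ico.2 ⟨by omega, hlt x hx⟩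

lemma galeLt_Ico_insert_succ {a b : ℕ} (hab : a ≤ b) :
    galeLt (Ico a (b + 1)) (insert (b + 1) (Ico a b)) := by
  refine ⟨galeLe_Ico_iff.2 ⟨by rw [card_insert_Ico le_self_add]; omega, fun k hk => ?_⟩, ?_⟩
  · rw [card_insert_Ico le_self_add] at hk
    rw [nthSmall_insert_Ico le_self_add (by omega)]
    split_ifs <;> omega
  · intro h
    have hmem : b + 1 ∈ Ico a (b + 1) := h ▸ mem_insert_self _ _
    exact lt_irrefl _ (mem_Ico.1 hmem).2

lemma galeLe_insert_succ_of_galeLt {a b : ℕ} {D : Finset ℕ}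
    (h : galeLt (Ico a (b + 1)) D) : galeLe (insert (b + 1) (Ico a b)) D := by
  obtain ⟨hcard, hle⟩ := galeLe_Ico_iff.1 h.1
  refine ⟨by rw [card_insert_Ico le_self_add]; omega, fun k hk => ?_⟩
  rw [nthSmall_insert_Ico le_self_add (by omega)]
  split_ifs with hkb
  · exact hle k hk
  · obtain ⟨x, hx, hbx⟩ := exists_le_of_galeLt_Ico h (by omega)
    have hx_le := le_nthSmall_card_sub_one hx
    obtain rfl : k = D.card - 1 := by omega
    omega

lemma galeLt_Ico_succ_Ico {a b : ℕ} (hab : a ≤ b) : galeLt (Ico a (b + 1)) (Ico a b) := by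
  refine ⟨galeLe_Ico_iff.2 ⟨by rw [Nat.card_Ico]; omega, fun k hk => ?_⟩, fun h => ?_⟩
  · rw [Nat.card_Ico] at hk
    rw [nthSmall_Ico hk]
  · have hcard := congrArg card h
    rw [Nat.card_Ico, Nat.card_Ico] at hcard
    omega

lemma galeLe_Ico_of_galeLt {a b : ℕ} {D : Finset ℕ} (h : galeLt (Ico a (b + 1)) D)
    (hD : ∀ x ∈ D, x ≤ b) : galeLe (Ico a b) D := by
  obtain ⟨hcard, hle⟩ := galeLe_Ico_iff.1 h.1
  refine galeLe_Ico_iff.2 ⟨?_, hle⟩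
  by_contra! hlt
  obtain ⟨x, hx, hbx⟩ := exists_le_of_galeLt_Ico h (by omega)
  exact absurd (hD x hx) (by omega)

lemma unique_galeCovers_of_forall_galeLe {n : ℕ} {C Ĉ : Finset ℕ} (hne : Ĉ.Nonempty)
    (hsub : Ĉ ⊆ Icc 1 n) (hlt : galeLt C Ĉ)
    (hleast : ∀ D, D.Nonempty → D ⊆ Icc 1 n → galeLt C D → galeLe Ĉ D) :
    Ĉ.Nonempty ∧ Ĉ ⊆ Icc 1 n ∧ galeCovers n C Ĉ ∧
      ∀ D : Finset ℕ, D.Nonempty → D ⊆ Icc 1 n → galeCovers n C D → D = Ĉ := by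
  refine ⟨hne, hsub, ⟨hlt, fun E hE hEsub hCE hEĈ => ?_⟩, fun D hD hDsub hcov => ?_⟩
  · exact hEĈ.2 (galeLe_antisymm hEĈ.1 (hleast E hE hEsub hCE))
  · by_contra hDĈ
    exact hcov.2 Ĉ hne hsub hlt ⟨hleast D hD hDsub hcov.1, Ne.symm hDĈ⟩

/-- Let `C = [a,b] ⊆ [n]` be an interval with `C ≠ {n}`. Then the
unique element covering `C` in `T_n` is `Ĉ = ((C ∖ {b}) ∪ {b+1}) ∩ [n]`. -/
theorem stmt_6 (n a b : ℕ) (ha : 1 ≤ a) (hab : a ≤ b) (hbn : b ≤ n)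
    (hne : Finset.Icc a b ≠ {n}) (C Chat : Finset ℕ)
    (hC : C = Finset.Icc a b)
    (hChat : Chat = ((C \ {b}) ∪ {b + 1}) ∩ Finset.Icc 1 n) :
    Chat.Nonempty ∧ Chat ⊆ Finset.Icc 1 n ∧ galeCovers n C Chat ∧
      ∀ D : Finset ℕ, D.Nonempty → D ⊆ Finset.Icc 1 n → galeCovers n C D → D = Chat := by
  have hsub : Chat ⊆ Icc 1 n := hChat ▸ inter_subset_right
  rw [← Ico_add_one_right_eq_Icc] at hC
  subst hC
  rcases hbn.lt_or_eq with hbn | rfl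
  · obtain rfl : Chat = insert (b + 1) (Ico a b) := by
      ext x; simp only [hChat, mem_inter, mem_union, mem_sdiff, mem_insert, mem_singleton,
        mem_Ico, mem_Icc]; omega
    exact unique_galeCovers_of_forall_galeLe (insert_nonempty _ _) hsub
      (galeLt_Ico_insert_succ hab) fun _ _ _ => galeLe_insert_succ_of_galeLt
  · have hab : a < b := hab.lt_of_ne (by rintro rfl; simp at hne)
    obtain rfl : Chat = Ico a b := by
      ext x; simp only [hChat, mem_inter, mem_union, mem_sdiff, mem_singleton, mem_Ico,
        mem_Icc]; omega
    exact unique_galeCovers_of_forall_galeLe (nonempty_Ico.2 hab) hsub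
      (galeLt_Ico_succ_Ico hab.le) fun _ _ hD h => galeLe_Ico_of_galeLt h
        fun x hx => (mem_Icc.1 (hD hx)).2
end

section
/- Let T be a semistandard Young tableau with columns (C_1, …, C_ℓ), each C_j ⊆ [n]. For a subset C ⊆ [n] define the Schubert dimension d(n, C) = (Σ_{i ∈ [n]∖C} i) − binom(n − #C + 1, 2), and set D_k(T) = Σ_{C ∈ T^{(k)}} d(k, C), where T^{(k)} is T restricted to entries ≤ k (a column of T^{(k)} is C_j ∩ [k], discarded if empty). Then for all k ∈ [n−1]: D_{k+1}(T) = D_k(T) + gap(λ^{(k+1)}(T), λ^{(k)}(T)), where gap(λ, μ) = Σ_i (μ_i − Σ_{j>i}(λ_j − μ_j)) counts the cells of λ lying neither on nor above a cell of the horizontal strip λ − μ. -/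
/-- The dimension `d(n, C) = (Σ_{i ∈ [n]∖C} i) − binom(n − #C + 1, 2)` of the
Schubert variety indexed by `C ⊆ [n]`. -/
def schubDim (n : ℕ) (C : Finset ℕ) : ℤ :=
  (∑ i ∈ Finset.Icc 1 n \ C, (i : ℤ)) - ((n - C.card + 1).choose 2 : ℤ)

/-- The set of entries of the `j`-th column (0-indexed) of a semistandard Young
tableau. -/
def colSetOf (μ : YoungDiagram) (T : SemistandardYoungTableau μ) (j : ℕ) : Finset ℕ :=
  (Finset.range (μ.colLen j)).image (fun i => T i j)

/-- `λ^{(k)}_{i+1}`: the length of row `i` (0-indexed) of the tableau `T` restricted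
to entries `≤ k`. -/
def partRow (μ : YoungDiagram) (T : SemistandardYoungTableau μ) (k i : ℕ) : ℕ :=
  ((Finset.range (μ.rowLen i)).filter (fun j => T i j ≤ k)).card

/-- `D_k(T) = Σ_{C ∈ T^{(k)}} d(k, C)`: the sum of the Schubert dimensions of the
columns of `T` restricted to entries `≤ k` (empty restricted columns contribute
`d(k, ∅) = 0`). -/
def Dstat (μ : YoungDiagram) (T : SemistandardYoungTableau μ) (k : ℕ) : ℤ :=
  ∑ j ∈ Finset.range (μ.rowLen 0), schubDim k ((colSetOf μ T j).filter (· ≤ k))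

/-- `gap(λ^{(k+1)}(T), λ^{(k)}(T)) = Σ_{i=1}^{k} (μ_i − Σ_{j>i} (λ_j − μ_j))` with
`λ = λ^{(k+1)}(T)`, `μ = λ^{(k)}(T)` (rows 0-indexed here). -/
def gapStat (μ : YoungDiagram) (T : SemistandardYoungTableau μ) (k : ℕ) : ℤ :=
  ∑ i ∈ Finset.range k,
    ((partRow μ T k i : ℤ) -
      ∑ j ∈ Finset.Icc (i + 1) k, ((partRow μ T (k + 1) j : ℤ) - (partRow μ T k j : ℤ)))

open Finset

/-- The number of entries `≤ k` in column `j`. -/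
def colCnt (μ : YoungDiagram) (T : SemistandardYoungTableau μ) (k j : ℕ) : ℕ :=
  ((Finset.range (μ.colLen j)).filter (fun i => T i j ≤ k)).card

section Aux

variable (μ : YoungDiagram) (T : SemistandardYoungTableau μ)

lemma aux_hge (h1 : ∀ c ∈ μ.cells, 1 ≤ T c.1 c.2) :
    ∀ i j, (i, j) ∈ μ → i + 1 ≤ T i j := by
  intro i
  induction i with
  | zero => intro j hj; exact h1 (0, j) ((YoungDiagram.mem_cells _).2 hj)
  | succ i ih =>
    intro j hj
    show i + 1 + 1 ≤ T (i + 1) j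
    have hup : (i, j) ∈ μ := μ.up_left_mem (Nat.le_succ i) le_rfl hj
    have h2 : T i j < T (i + 1) j := T.col_strict (Nat.lt_succ_self i) hj
    have h3 := ih j hup
    omega

lemma aux_rowLen_zero (i : ℕ) (hi : μ.colLen 0 ≤ i) : μ.rowLen i = 0 := by
  by_contra h
  have hm : (i, 0) ∈ μ := YoungDiagram.mem_iff_lt_rowLen.2 (Nat.pos_of_ne_zero h)
  have := YoungDiagram.mem_iff_lt_colLen.1 hm
  omega

lemma aux_partRow_zero_of_big (h1 : ∀ c ∈ μ.cells, 1 ≤ T c.1 c.2) (k i : ℕ) (hi : k ≤ i) :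
    partRow μ T k i = 0 := by
  rw [partRow, Finset.card_eq_zero, Finset.filter_eq_empty_iff]
  intro j hj
  have hcell : (i, j) ∈ μ := YoungDiagram.mem_iff_lt_rowLen.2 (mem_range.1 hj)
  have := aux_hge μ T h1 i j hcell
  omega

lemma aux_partRow_zero_of_row (i k : ℕ) (hi : μ.colLen 0 ≤ i) :
    partRow μ T k i = 0 := by
  rw [partRow, aux_rowLen_zero μ i hi]
  simp

lemma aux_sum_range_eq (f : ℕ → ℤ) (a b : ℕ) (ha : ∀ i, a ≤ i → f i = 0)
    (hb : ∀ i, b ≤ i → f i = 0) :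
    ∑ i ∈ Finset.range a, f i = ∑ i ∈ Finset.range b, f i := by
  rcases le_total a b with h | h
  · exact Finset.sum_subset (Finset.range_subset_range.2 h)
      (fun i _ hia => ha i (by simp only [Finset.mem_range, not_lt] at hia; exact hia))
  · exact (Finset.sum_subset (Finset.range_subset_range.2 h)
      (fun i _ hib => hb i (by simp only [Finset.mem_range, not_lt] at hib; exact hib))).symm

/-- The key per-column computation. -/
lemma colStep (h1 : ∀ c ∈ μ.cells, 1 ≤ T c.1 c.2) (k j : ℕ) :
    schubDim (k + 1) ((colSetOf μ T j).filter (· ≤ k + 1))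
      = schubDim k ((colSetOf μ T j).filter (· ≤ k)) + (colCnt μ T k j : ℤ)
        - ∑ i ∈ Finset.range (μ.colLen j), (if T i j = k + 1 then (i : ℤ) else 0) := by
  have hmem : ∀ i, i < μ.colLen j → (i, j) ∈ μ := fun i hi => YoungDiagram.mem_iff_lt_colLen.2 hi
  have hlt : ∀ a b, a < b → b < μ.colLen j → T a j < T b j :=
    fun a b hab hb => T.col_strict hab (hmem b hb)
  have hinj : ∀ a ∈ Finset.range (μ.colLen j), ∀ b ∈ Finset.range (μ.colLen j),
      T a j = T b j → a = b := by
    intro a ha b hb h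
    rcases lt_trichotomy a b with hab | hab | hab
    · exact absurd h (Nat.ne_of_lt (hlt a b hab (mem_range.1 hb)))
    · exact hab
    · exact absurd h.symm (Nat.ne_of_lt (hlt b a hab (mem_range.1 ha)))
  have hcardf : ∀ (m : ℕ),
      ((colSetOf μ T j).filter (· ≤ m)).card
        = ((Finset.range (μ.colLen j)).filter (fun i => T i j ≤ m)).card := by
    intro m
    rw [colSetOf, Finset.filter_image]
    exact Finset.card_image_of_injOn
      (fun a ha b hb => hinj a (Finset.mem_of_mem_filter a ha) b (Finset.mem_of_mem_filter b hb))
  by_cases hk1 : ∃ i, i < μ.colLen j ∧ T i j = k + 1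
  · obtain ⟨i0, hi0, hti0⟩ := hk1
    have hle : ∀ i, i < μ.colLen j → (T i j ≤ k ↔ i < i0) := by
      intro i hi
      constructor
      · intro h
        by_contra hni
        push_neg at hni
        rcases Nat.eq_or_lt_of_le hni with h' | h'
        · subst h'; omega
        · have := hlt i0 i h' hi; omega
      · intro h
        have := hlt i i0 h hi0
        omega
    have hfk : (Finset.range (μ.colLen j)).filter (fun i => T i j ≤ k) = Finset.range i0 := by
      ext i
      simp only [Finset.mem_filter, Finset.mem_range]
      constructor
      · rintro ⟨hi, h⟩; exact (hle i hi).1 h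
      · intro h; exact ⟨lt_trans h hi0, (hle i (lt_trans h hi0)).2 h⟩
    have hc : colCnt μ T k j = i0 := by rw [colCnt, hfk, Finset.card_range]
    have hkcol : (k + 1) ∈ colSetOf μ T j :=
      Finset.mem_image.2 ⟨i0, mem_range.2 hi0, hti0⟩
    have hknot : (k + 1) ∉ (colSetOf μ T j).filter (· ≤ k) := by
      simp only [Finset.mem_filter, not_and]
      intro _; omega
    have hfilter : (colSetOf μ T j).filter (· ≤ k + 1)
        = insert (k + 1) ((colSetOf μ T j).filter (· ≤ k)) := by
      ext x
      simp only [Finset.mem_filter, Finset.mem_insert]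
      constructor
      · rintro ⟨hx, hxle⟩
        rcases Nat.lt_or_ge x (k + 1) with h | h
        · exact Or.inr ⟨hx, by omega⟩
        · exact Or.inl (by omega)
      · rintro (rfl | ⟨hx, hxle⟩)
        · exact ⟨hkcol, le_rfl⟩
        · exact ⟨hx, by omega⟩
    have hcard' : ((colSetOf μ T j).filter (· ≤ k + 1)).card
        = ((colSetOf μ T j).filter (· ≤ k)).card + 1 := by
      rw [hfilter, Finset.card_insert_of_notMem hknot]
    have hsdiff : Finset.Icc 1 (k + 1) \ ((colSetOf μ T j).filter (· ≤ k + 1))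
        = Finset.Icc 1 k \ ((colSetOf μ T j).filter (· ≤ k)) := by
      rw [hfilter]
      ext x
      simp only [Finset.mem_sdiff, Finset.mem_Icc, Finset.mem_insert, not_or]
      constructor
      · rintro ⟨⟨ha, hb⟩, hc', hd⟩; exact ⟨⟨ha, by omega⟩, hd⟩
      · rintro ⟨⟨ha, hb⟩, hd⟩; exact ⟨⟨ha, by omega⟩, by omega, hd⟩
    have he : ∑ i ∈ Finset.range (μ.colLen j), (if T i j = k + 1 then (i : ℤ) else 0)
        = (i0 : ℤ) := by
      have hcongr : ∀ i ∈ Finset.range (μ.colLen j),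
          (if T i j = k + 1 then (i : ℤ) else 0) = if i = i0 then (i0 : ℤ) else 0 := by
        intro i hi
        by_cases h : T i j = k + 1
        · have hii : i = i0 := hinj i hi i0 (mem_range.2 hi0) (by rw [h, hti0])
          rw [if_pos h, if_pos hii, hii]
        · have : i ≠ i0 := fun e => h (e ▸ hti0)
          simp [h, this]
      rw [Finset.sum_congr rfl hcongr, Finset.sum_ite_eq' (Finset.range (μ.colLen j)) i0]
      simp [mem_range.2 hi0]
    rw [he, schubDim, schubDim, hsdiff, hcard', hc]
    have : k + 1 - (((colSetOf μ T j).filter (· ≤ k)).card + 1)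
        = k - ((colSetOf μ T j).filter (· ≤ k)).card := by omega
    rw [this]
    ring
  · push_neg at hk1
    have hfilter : (colSetOf μ T j).filter (· ≤ k + 1) = (colSetOf μ T j).filter (· ≤ k) := by
      ext x
      simp only [Finset.mem_filter, and_congr_right_iff]
      intro hx
      obtain ⟨i, hi, rfl⟩ := Finset.mem_image.1 hx
      have := hk1 i (mem_range.1 hi)
      constructor <;> intro <;> omega
    have he0 : ∑ i ∈ Finset.range (μ.colLen j), (if T i j = k + 1 then (i : ℤ) else 0) = 0 := by
      refine Finset.sum_eq_zero fun i hi => ?_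
      simp [hk1 i (mem_range.1 hi)]
    have hcard_le : ((colSetOf μ T j).filter (· ≤ k)).card ≤ k := by
      have hsub : (colSetOf μ T j).filter (· ≤ k) ⊆ Finset.Icc 1 k := by
        intro x hx
        obtain ⟨hxc, hxk⟩ := Finset.mem_filter.1 hx
        obtain ⟨i, hi, rfl⟩ := Finset.mem_image.1 hxc
        have h1x := h1 (i, j) ((YoungDiagram.mem_cells _).2 (hmem i (mem_range.1 hi)))
        exact Finset.mem_Icc.2 ⟨h1x, hxk⟩
      calc ((colSetOf μ T j).filter (· ≤ k)).card ≤ (Finset.Icc 1 k).card :=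
            Finset.card_le_card hsub
        _ = k := by simp
    have hknotmem : (k + 1) ∉ (colSetOf μ T j).filter (· ≤ k) := by
      simp only [Finset.mem_filter, not_and]
      intro _; omega
    have hcc : colCnt μ T k j = ((colSetOf μ T j).filter (· ≤ k)).card := (hcardf k).symm
    have hsdiff : Finset.Icc 1 (k + 1) \ ((colSetOf μ T j).filter (· ≤ k + 1))
        = insert (k + 1) (Finset.Icc 1 k \ ((colSetOf μ T j).filter (· ≤ k))) := by
      rw [hfilter]
      ext x
      simp only [Finset.mem_sdiff, Finset.mem_Icc, Finset.mem_insert]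
      constructor
      · rintro ⟨⟨ha, hb⟩, hcx⟩
        by_cases h : x = k + 1
        · exact Or.inl h
        · exact Or.inr ⟨⟨ha, by omega⟩, hcx⟩
      · rintro (rfl | ⟨⟨ha, hb⟩, hcx⟩)
        · exact ⟨⟨by omega, le_rfl⟩, hknotmem⟩
        · exact ⟨⟨ha, by omega⟩, hcx⟩
    have hknotmem2 : (k + 1) ∉ Finset.Icc 1 k \ ((colSetOf μ T j).filter (· ≤ k)) := by
      simp only [Finset.mem_sdiff, Finset.mem_Icc, not_and]
      intro h; omega
    have hsum : ∑ i ∈ Finset.Icc 1 (k + 1) \ ((colSetOf μ T j).filter (· ≤ k + 1)), (i : ℤ)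
        = (k + 1 : ℤ) + ∑ i ∈ Finset.Icc 1 k \ ((colSetOf μ T j).filter (· ≤ k)), (i : ℤ) := by
      rw [hsdiff, Finset.sum_insert hknotmem2]
      push_cast
      ring
    set c := ((colSetOf μ T j).filter (· ≤ k)).card with hcdef
    have hchoose : (k + 1 - c + 1).choose 2 = (k - c + 1).choose 2 + (k - c + 1) := by
      have h2 : k + 1 - c + 1 = (k - c + 1) + 1 := by omega
      rw [h2, Nat.choose_succ_succ]
      simp [Nat.choose_one_right]
      omega
    rw [schubDim, schubDim, hsum, hfilter, he0, hcc, ← hcdef, hchoose]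
    have hcast : ((k - c : ℕ) : ℤ) = (k : ℤ) - (c : ℤ) := by
      rw [Nat.cast_sub hcard_le]
    push_cast [hcast]
    ring

end Aux

/-- For a semistandard Young tableau `T` with entries in `[n]` and
all `k ∈ [n−1]`: `D_{k+1}(T) = D_k(T) + gap(λ^{(k+1)}(T), λ^{(k)}(T))`. -/
theorem stmt_14 (n : ℕ) (μ : YoungDiagram) (T : SemistandardYoungTableau μ)
    (hentries : ∀ c ∈ μ.cells, 1 ≤ T c.1 c.2 ∧ T c.1 c.2 ≤ n) :
    ∀ k, 1 ≤ k → k ≤ n - 1 → Dstat μ T (k + 1) = Dstat μ T k + gapStat μ T k := by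
  intro k _ _
  classical
  have h1 : ∀ c ∈ μ.cells, 1 ≤ T c.1 c.2 := fun c hc => (hentries c hc).1
  set R := μ.colLen 0 with hR
  set Cn := μ.rowLen 0 with hCn
  -- indicator functions
  set f : ℕ → ℕ → ℤ := fun i j => if (i, j) ∈ μ ∧ T i j ≤ k then 1 else 0 with hf
  set g : ℕ → ℕ → ℤ := fun i j => if (i, j) ∈ μ ∧ T i j = k + 1 then (i : ℤ) else 0 with hg
  -- (a) column count as a full-range sum
  have ha : ∀ j, (colCnt μ T k j : ℤ) = ∑ i ∈ Finset.range R, f i j := by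
    intro j
    have hsub : Finset.range (μ.colLen j) ⊆ Finset.range R :=
      Finset.range_subset_range.2 (μ.colLen_anti 0 j (Nat.zero_le j))
    have hz : ∀ i ∈ Finset.range R, i ∉ Finset.range (μ.colLen j) → f i j = 0 := by
      intro i _ hi
      have : (i, j) ∉ μ := fun h => hi (Finset.mem_range.2 (YoungDiagram.mem_iff_lt_colLen.1 h))
      simp [hf, this]
    rw [← Finset.sum_subset hsub hz]
    rw [colCnt, Finset.card_filter]
    push_cast
    refine Finset.sum_congr rfl fun i hi => ?_
    have hcell : (i, j) ∈ μ := YoungDiagram.mem_iff_lt_colLen.2 (Finset.mem_range.1 hi)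
    simp [hf, hcell]
  -- (b) column "position of k+1" sum as a full-range sum
  have hb : ∀ j, ∑ i ∈ Finset.range (μ.colLen j), (if T i j = k + 1 then (i : ℤ) else 0)
      = ∑ i ∈ Finset.range R, g i j := by
    intro j
    have hsub : Finset.range (μ.colLen j) ⊆ Finset.range R :=
      Finset.range_subset_range.2 (μ.colLen_anti 0 j (Nat.zero_le j))
    have hz : ∀ i ∈ Finset.range R, i ∉ Finset.range (μ.colLen j) → g i j = 0 := by
      intro i _ hi
      have : (i, j) ∉ μ := fun h => hi (Finset.mem_range.2 (YoungDiagram.mem_iff_lt_colLen.1 h))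
      simp [hg, this]
    rw [← Finset.sum_subset hsub hz]
    refine Finset.sum_congr rfl fun i hi => ?_
    have hcell : (i, j) ∈ μ := YoungDiagram.mem_iff_lt_colLen.2 (Finset.mem_range.1 hi)
    simp [hg, hcell]
  -- (c) row count as a full-range sum
  have hc : ∀ i, (partRow μ T k i : ℤ) = ∑ j ∈ Finset.range Cn, f i j := by
    intro i
    have hsub : Finset.range (μ.rowLen i) ⊆ Finset.range Cn :=
      Finset.range_subset_range.2 (μ.rowLen_anti 0 i (Nat.zero_le i))
    have hz : ∀ j ∈ Finset.range Cn, j ∉ Finset.range (μ.rowLen i) → f i j = 0 := by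
      intro j _ hj
      have : (i, j) ∉ μ := fun h => hj (Finset.mem_range.2 (YoungDiagram.mem_iff_lt_rowLen.1 h))
      simp [hf, this]
    rw [← Finset.sum_subset hsub hz]
    rw [partRow, Finset.card_filter]
    push_cast
    refine Finset.sum_congr rfl fun j hj => ?_
    have hcell : (i, j) ∈ μ := YoungDiagram.mem_iff_lt_rowLen.2 (Finset.mem_range.1 hj)
    simp [hf, hcell]
  -- (d) row sum of g
  have hd : ∀ i, ∑ j ∈ Finset.range Cn, g i j
      = (i : ℤ) * ((partRow μ T (k + 1) i : ℤ) - (partRow μ T k i : ℤ)) := by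
    intro i
    have hsub : Finset.range (μ.rowLen i) ⊆ Finset.range Cn :=
      Finset.range_subset_range.2 (μ.rowLen_anti 0 i (Nat.zero_le i))
    have hz : ∀ j ∈ Finset.range Cn, j ∉ Finset.range (μ.rowLen i) → g i j = 0 := by
      intro j _ hj
      have : (i, j) ∉ μ := fun h => hj (Finset.mem_range.2 (YoungDiagram.mem_iff_lt_rowLen.1 h))
      simp [hg, this]
    rw [← Finset.sum_subset hsub hz]
    have hstep : ∑ j ∈ Finset.range (μ.rowLen i), g i j
        = ∑ j ∈ Finset.range (μ.rowLen i), (if T i j = k + 1 then (i : ℤ) else 0) := by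
      refine Finset.sum_congr rfl fun j hj => ?_
      have hcell : (i, j) ∈ μ := YoungDiagram.mem_iff_lt_rowLen.2 (Finset.mem_range.1 hj)
      simp [hg, hcell]
    rw [hstep, ← Finset.sum_filter]
    rw [Finset.sum_const, nsmul_eq_mul]
    -- now need: card(filter (= k+1)) = partRow (k+1) - partRow k
    have hcount : partRow μ T (k + 1) i
        = partRow μ T k i
          + ((Finset.range (μ.rowLen i)).filter (fun j => T i j = k + 1)).card := by
      rw [partRow, partRow]
      have : (Finset.range (μ.rowLen i)).filter (fun j => T i j ≤ k + 1)
          = (Finset.range (μ.rowLen i)).filter (fun j => T i j ≤ k)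
            ∪ (Finset.range (μ.rowLen i)).filter (fun j => T i j = k + 1) := by
        rw [← Finset.filter_or]
        exact Finset.filter_congr fun j _ => by constructor <;> intro <;> omega
      rw [this, Finset.card_union_of_disjoint]
      rw [Finset.disjoint_left]
      intro a ha ha'
      have h1a := (Finset.mem_filter.1 ha).2
      have h2a := (Finset.mem_filter.1 ha').2
      omega
    have : (((Finset.range (μ.rowLen i)).filter (fun j => T i j = k + 1)).card : ℤ)
        = (partRow μ T (k + 1) i : ℤ) - (partRow μ T k i : ℤ) := by
      rw [hcount]; push_cast; ring
    rw [this]; ring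
  -- sums A and B
  have hA : ∑ j ∈ Finset.range Cn, (colCnt μ T k j : ℤ)
      = ∑ i ∈ Finset.range k, (partRow μ T k i : ℤ) := by
    calc ∑ j ∈ Finset.range Cn, (colCnt μ T k j : ℤ)
        = ∑ j ∈ Finset.range Cn, ∑ i ∈ Finset.range R, f i j :=
          Finset.sum_congr rfl fun j _ => ha j
      _ = ∑ i ∈ Finset.range R, ∑ j ∈ Finset.range Cn, f i j := Finset.sum_comm
      _ = ∑ i ∈ Finset.range R, (partRow μ T k i : ℤ) :=
          Finset.sum_congr rfl fun i _ => (hc i).symm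
      _ = ∑ i ∈ Finset.range k, (partRow μ T k i : ℤ) := by
          refine aux_sum_range_eq (fun i => (partRow μ T k i : ℤ)) R k ?_ ?_
          · intro i hi
            show ((partRow μ T k i : ℕ) : ℤ) = 0
            rw [aux_partRow_zero_of_row μ T i k hi]; norm_num
          · intro i hi
            show ((partRow μ T k i : ℕ) : ℤ) = 0
            rw [aux_partRow_zero_of_big μ T h1 k i hi]; norm_num
  have hB : ∑ j ∈ Finset.range Cn,
        (∑ i ∈ Finset.range (μ.colLen j), (if T i j = k + 1 then (i : ℤ) else 0))
      = ∑ i ∈ Finset.range (k + 1),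
          (i : ℤ) * ((partRow μ T (k + 1) i : ℤ) - (partRow μ T k i : ℤ)) := by
    calc ∑ j ∈ Finset.range Cn,
          (∑ i ∈ Finset.range (μ.colLen j), (if T i j = k + 1 then (i : ℤ) else 0))
        = ∑ j ∈ Finset.range Cn, ∑ i ∈ Finset.range R, g i j :=
          Finset.sum_congr rfl fun j _ => hb j
      _ = ∑ i ∈ Finset.range R, ∑ j ∈ Finset.range Cn, g i j := Finset.sum_comm
      _ = ∑ i ∈ Finset.range R,
            (i : ℤ) * ((partRow μ T (k + 1) i : ℤ) - (partRow μ T k i : ℤ)) :=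
          Finset.sum_congr rfl fun i _ => hd i
      _ = ∑ i ∈ Finset.range (k + 1),
            (i : ℤ) * ((partRow μ T (k + 1) i : ℤ) - (partRow μ T k i : ℤ)) := by
          refine aux_sum_range_eq _ R (k + 1) ?_ ?_
          · intro i hi
            show (i : ℤ) * ((partRow μ T (k + 1) i : ℤ) - (partRow μ T k i : ℤ)) = 0
            rw [aux_partRow_zero_of_row μ T i (k + 1) hi, aux_partRow_zero_of_row μ T i k hi]
            norm_num
          · intro i hi
            show (i : ℤ) * ((partRow μ T (k + 1) i : ℤ) - (partRow μ T k i : ℤ)) = 0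
            rw [aux_partRow_zero_of_big μ T h1 (k + 1) i hi,
              aux_partRow_zero_of_big μ T h1 k i (by omega)]
            norm_num
  -- rewrite gapStat
  have hgap : gapStat μ T k
      = ∑ i ∈ Finset.range k, (partRow μ T k i : ℤ)
        - ∑ i ∈ Finset.range (k + 1),
            (i : ℤ) * ((partRow μ T (k + 1) i : ℤ) - (partRow μ T k i : ℤ)) := by
    rw [gapStat, Finset.sum_sub_distrib]
    congr 1
    set d : ℕ → ℤ := fun j => (partRow μ T (k + 1) j : ℤ) - (partRow μ T k j : ℤ) with hdd
    have step1 : ∀ i, ∑ j ∈ Finset.Icc (i + 1) k, d j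
        = ∑ j ∈ Finset.range (k + 1), (if i + 1 ≤ j then d j else 0) := by
      intro i
      have : Finset.Icc (i + 1) k = (Finset.range (k + 1)).filter (fun j => i + 1 ≤ j) := by
        ext x
        simp only [Finset.mem_Icc, Finset.mem_filter, Finset.mem_range]
        omega
      rw [this, Finset.sum_filter]
    calc ∑ i ∈ Finset.range k, ∑ j ∈ Finset.Icc (i + 1) k, d j
        = ∑ i ∈ Finset.range k, ∑ j ∈ Finset.range (k + 1), (if i + 1 ≤ j then d j else 0) :=
          Finset.sum_congr rfl fun i _ => step1 i
      _ = ∑ j ∈ Finset.range (k + 1), ∑ i ∈ Finset.range k, (if i + 1 ≤ j then d j else 0) :=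
          Finset.sum_comm
      _ = ∑ j ∈ Finset.range (k + 1), (j : ℤ) * d j := by
          refine Finset.sum_congr rfl fun j hj => ?_
          have hjk : j ≤ k := by simpa using Nat.lt_succ_iff.1 (Finset.mem_range.1 hj)
          have hflt : (Finset.range k).filter (fun i => i + 1 ≤ j) = Finset.range j := by
            ext x
            simp only [Finset.mem_filter, Finset.mem_range]
            omega
          rw [← Finset.sum_filter, hflt, Finset.sum_const, nsmul_eq_mul, Finset.card_range]
  -- combine
  have hDstep : Dstat μ T (k + 1)
      = Dstat μ T k + ∑ j ∈ Finset.range Cn, (colCnt μ T k j : ℤ)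
        - ∑ j ∈ Finset.range Cn,
            (∑ i ∈ Finset.range (μ.colLen j), (if T i j = k + 1 then (i : ℤ) else 0)) := by
    rw [Dstat, Dstat, ← hCn]
    rw [Finset.sum_congr rfl fun j _ => colStep μ T h1 k j]
    rw [Finset.sum_sub_distrib, Finset.sum_add_distrib]
  rw [hDstep, hA, hB, hgap]
  ring
end

section
/- Define the leg polynomial of a semistandard Young tableau T with columns (C_1, …, C_ℓ): for cells (i,j), let Leg⁺_T(i,j) = C_j ∩ [T_{ij}, T_{i(j+1)}] if the cell (i, j+1) exists and its entry T_{i(j+1)} is not in C_j, and ∅ otherwise; then Φ_T(Y) = ∏_{(i,j): Leg⁺_T(i,j) ≠ ∅} (1 − Y^{#Leg⁺_T(i,j)}). For a reduced tableau T whose columns satisfy C_1 ⊇ C_2 ⊇ ⋯ ⊇ C_ℓ (as sets), Φ_T(Y) = 1. Conversely, if Φ_T(Y) = 1 for a reduced tableau T, then its columns form a chain under reverse set containment. -/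
/-- The leg set `Leg⁺_T(i,j) = C_j ∩ [T_{ij}, T_{i(j+1)}]` if the cell `(i, j+1)`
exists and its entry is not in `C_j`, and `∅` otherwise. -/
def legSet (μ : YoungDiagram) (T : SemistandardYoungTableau μ) (i j : ℕ) : Finset ℕ :=
  if (i, j + 1) ∈ μ ∧ T i (j + 1) ∉ colSetOf μ T j then
    (colSetOf μ T j).filter (fun v => T i j ≤ v ∧ v ≤ T i (j + 1))
  else ∅

/-- The leg polynomial `Φ_T(Y) = ∏_{(i,j) : Leg⁺_T(i,j) ≠ ∅} (1 − Y^{#Leg⁺_T(i,j)})`. -/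
noncomputable def legPoly (μ : YoungDiagram) (T : SemistandardYoungTableau μ) :
    Polynomial ℤ :=
  ∏ c ∈ μ.cells,
    (if (legSet μ T c.1 c.2).Nonempty then 1 - Polynomial.X ^ (legSet μ T c.1 c.2).card
      else 1)

lemma leg_nonempty_iff (μ : YoungDiagram) (T : SemistandardYoungTableau μ) (i j : ℕ)
    (hc : (i, j) ∈ μ) :
    (legSet μ T i j).Nonempty ↔ ((i, j + 1) ∈ μ ∧ T i (j + 1) ∉ colSetOf μ T j) := by
  unfold legSet
  split_ifs with h
  · refine ⟨fun _ => h, fun _ => ⟨T i j, Finset.mem_filter.mpr ⟨?_, le_rfl, ?_⟩⟩⟩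
    · exact Finset.mem_image.mpr ⟨i, Finset.mem_range.mpr (YoungDiagram.mem_iff_lt_colLen.mp hc), rfl⟩
    · exact T.row_weak (Nat.lt_succ_self j) h.1
  · simp [h]

/-- For a reduced semistandard Young tableau `T` with entries in
`[n]`, the leg polynomial satisfies `Φ_T(Y) = 1` if and only if the columns of `T`
form a chain under reverse set containment `C_1 ⊇ C_2 ⊇ ⋯ ⊇ C_ℓ`. -/
theorem stmt_16 (n : ℕ) (μ : YoungDiagram) (T : SemistandardYoungTableau μ)
    (hentries : ∀ c ∈ μ.cells, 1 ≤ T c.1 c.2 ∧ T c.1 c.2 ≤ n)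
    (hreduced : ∀ j1 < μ.rowLen 0, ∀ j2 < μ.rowLen 0,
      colSetOf μ T j1 = colSetOf μ T j2 → j1 = j2) :
    legPoly μ T = 1 ↔
      ∀ j, j + 1 < μ.rowLen 0 → colSetOf μ T (j + 1) ⊆ colSetOf μ T j := by
  constructor
  · intro h1 j hj v hv
    obtain ⟨i, hi, rfl⟩ := Finset.mem_image.mp hv
    have hi' : (i, j + 1) ∈ μ := YoungDiagram.mem_iff_lt_colLen.mpr (Finset.mem_range.mp hi)
    by_contra hvn
    have hc : (i, j) ∈ μ := μ.up_left_mem le_rfl (Nat.le_succ j) hi'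
    have hne : (legSet μ T i j).Nonempty := (leg_nonempty_iff μ T i j hc).mpr ⟨hi', hvn⟩
    have heval : Polynomial.eval 1 (legPoly μ T) = 0 := by
      unfold legPoly
      rw [Polynomial.eval_prod]
      refine Finset.prod_eq_zero (i := (i, j)) ((YoungDiagram.mem_cells _).mpr hc) ?_
      rw [if_pos hne]
      simp
    rw [h1] at heval
    simp at heval
  · intro h
    unfold legPoly
    apply Finset.prod_eq_one
    intro c hc
    rw [if_neg]
    intro hne
    have hcμ : (c.1, c.2) ∈ μ := (YoungDiagram.mem_cells _).mp hc
    obtain ⟨h1, h2⟩ := (leg_nonempty_iff μ T c.1 c.2 hcμ).mp hne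
    have h0 : (0, c.2 + 1) ∈ μ := μ.up_left_mem (Nat.zero_le _) le_rfl h1
    have hlt : c.2 + 1 < μ.rowLen 0 := YoungDiagram.mem_iff_lt_rowLen.mp h0
    exact h2 (h c.2 hlt (Finset.mem_image.mpr
      ⟨c.1, Finset.mem_range.mpr (YoungDiagram.mem_iff_lt_colLen.mp h1), rfl⟩))
end
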